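/- Let t ∈ ℝ, δ > 0, and f : C_n → ℝ, and assume there exists z ∈ C_n with f(z) ≥ tn. Define h₀ : ℝ → ℝ by h₀(x) = 2x+1 for x ≤ −1, h₀(x) = −x² for −1 ≤ x ≤ 0, and h₀(x) = 0 for x ≥ 0; set ψ(x) = n·h₀((x/n − t)/δ), g = ψ∘f, and let ν be the Gibbs distribution with Hamiltonian g; set δ' = ((log 4 + 1)/2)·δ. Define φ : C_n → ℝ by φ(y) = 0 if f(y) < (t − δ')n, φ(y) = e^{g(y)} if (t − δ')n ≤ f(y) < tn, and φ(y) = 1 if f(y) ≥ tn; let σ be the probability measure with dσ = φ dμ / ∫_{C_n} φ dμ. Then there exists a coupling of X_n^g ∼ ν and X_φ ∼ σ such that E‖X_n^g − X_φ‖₁ ≤ 2n·2^{−n}; in fact, the total variation distance satisfies TV(ν, σ) ≤ 2·2^{−n}. -/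
import Mathlib


open MeasureTheory

noncomputable section

namespace Paper

/-- The Boolean hypercube `{-1,1}^n` as a finite set of vectors in `ℝ^n`. -/
def cube (n : ℕ) : Finset (Fin n → ℝ) := Fintype.piFinset fun _ => ({-1, 1} : Finset ℝ)

/-- The ℓ¹ norm of a vector. -/
def onorm {n : ℕ} (v : Fin n → ℝ) : ℝ := ∑ i, |v i|

/-- The Euclidean (ℓ²) norm of a vector. -/
def tnorm {n : ℕ} (v : Fin n → ℝ) : ℝ := Real.sqrt (∑ i, (v i) ^ 2)

/-- Discrete derivative of `f` at coordinate `i`. -/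
def dd {n : ℕ} (f : (Fin n → ℝ) → ℝ) (i : Fin n) (y : Fin n → ℝ) : ℝ :=
  (f (Function.update y i 1) - f (Function.update y i (-1))) / 2

/-- Discrete gradient of `f`. -/
def dgrad {n : ℕ} (f : (Fin n → ℝ) → ℝ) (y : Fin n → ℝ) : Fin n → ℝ := fun i => dd f i y

/-- The multilinear (harmonic) extension of `f : C_n → ℝ` to `[-1,1]^n`. -/
def mlext {n : ℕ} (f : (Fin n → ℝ) → ℝ) (x : Fin n → ℝ) : ℝ :=
  ∑ S : Finset (Fin n),
    (((2 : ℝ) ^ n)⁻¹ * ∑ y ∈ cube n, f y * ∏ i ∈ S, y i) * ∏ i ∈ S, x i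

/-- The multilinear extension of the discrete gradient of `f`. -/
def mlgrad {n : ℕ} (f : (Fin n → ℝ) → ℝ) (x : Fin n → ℝ) : Fin n → ℝ :=
  fun i => mlext (dd f i) x

/-- The Lipschitz constant `Lip(f) = max_{i,y∈C_n} |∂_i f(y)|`. -/
def lip {n : ℕ} (f : (Fin n → ℝ) → ℝ) : ℝ :=
  sSup {a | ∃ i : Fin n, ∃ y ∈ cube n, a = |dd f i y|}

/-- The Lipschitz constant of the discrete gradient:
`max_{x ≠ y ∈ C_n} ‖∇f(x) - ∇f(y)‖₁ / ‖x - y‖₁`. -/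
def gradLip {n : ℕ} (f : (Fin n → ℝ) → ℝ) : ℝ :=
  sSup {a | ∃ x ∈ cube n, ∃ y ∈ cube n, x ≠ y ∧
    a = onorm (dgrad f x - dgrad f y) / onorm (x - y)}

/-- Gaussian width of a set `K ⊆ ℝ^n`. -/
def gaussianWidth {n : ℕ} (K : Set (Fin n → ℝ)) : ℝ :=
  ∫ θ, sSup ((fun v => ∑ i, v i * θ i) '' K)
    ∂(Measure.pi fun _ : Fin n => ProbabilityTheory.gaussianReal 0 1)

/-- Gradient complexity `D(f) = GW({∇f(y) : y ∈ C_n} ∪ {0})`. -/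
def gradComplexity {n : ℕ} (f : (Fin n → ℝ) → ℝ) : ℝ :=
  gaussianWidth ((dgrad f '' (cube n : Set (Fin n → ℝ))) ∪ {0})

/-- The Gibbs distribution with Hamiltonian `f`, as a weight function on `ℝ^n`
supported on the cube. -/
def gibbs {n : ℕ} (f : (Fin n → ℝ) → ℝ) (y : Fin n → ℝ) : ℝ :=
  if y ∈ cube n then Real.exp (f y) / ∑ z ∈ cube n, Real.exp (f z) else 0

/-- The tilt `τ_θ p` of a weight function `p` on the cube. -/
def tilt {n : ℕ} (p : (Fin n → ℝ) → ℝ) (θ : Fin n → ℝ) (y : Fin n → ℝ) : ℝ :=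
  p y * Real.exp (∑ i, θ i * y i) / ∑ z ∈ cube n, p z * Real.exp (∑ i, θ i * z i)

/-- The mean (center of mass) of the tilted measure `τ_θ p`. -/
def tiltMean {n : ℕ} (p : (Fin n → ℝ) → ℝ) (θ : Fin n → ℝ) : Fin n → ℝ :=
  fun i => ∑ y ∈ cube n, tilt p θ y * y i

/-- A weight function on the cube is a product measure: the coordinates are
independent Bernoulli-type variables. -/
def IsProduct {n : ℕ} (ξ : (Fin n → ℝ) → ℝ) : Prop :=
  (∀ y, y ∉ cube n → ξ y = 0) ∧
  ∃ q : Fin n → ℝ, (∀ i, q i ∈ Set.Icc (0 : ℝ) 1) ∧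
    ∀ y ∈ cube n, ξ y = ∏ i, (if y i = 1 then q i else 1 - q i)

/-- The Wasserstein (transportation) distance between two weight functions on the cube. -/
def W1 {n : ℕ} (p q : (Fin n → ℝ) → ℝ) : ℝ :=
  sInf {w | ∃ π : (Fin n → ℝ) × (Fin n → ℝ) → ℝ,
    (∀ a, 0 ≤ π a) ∧
    (∀ x, ∑ y ∈ cube n, π (x, y) = p x) ∧
    (∀ y, ∑ x ∈ cube n, π (x, y) = q y) ∧
    w = (1 / 2) * ∑ x ∈ cube n, ∑ y ∈ cube n, π (x, y) * onorm (x - y)}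

/-- `p` (the law of a random vector on the cube) is a `(ρ,δ,ε)`-tilt-mixture. -/
def IsTiltMixture {n : ℕ} (p : (Fin n → ℝ) → ℝ) (ρ : Measure (Fin n → ℝ))
    (δ ε : ℝ) : Prop :=
  ∃ m : Measure (Fin n → ℝ), IsProbabilityMeasure m ∧
    m {θ | ¬ (tnorm θ ≤ ε * Real.sqrt n ∧ ∀ i, |θ i| ≤ 1 / 4)} = 0 ∧
    (∀ φ : (Fin n → ℝ) → ℝ,
      ∑ y ∈ cube n, φ y * p y = ∫ θ, ∑ y ∈ cube n, φ y * tilt p θ y ∂m) ∧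
    ENNReal.ofReal (1 - δ) <
      m {θ | ∃ ξ, IsProduct ξ ∧ W1 (tilt p θ) ξ ≤ δ * n} ∧
    ρ = m.map (tiltMean p)

/-- The product weight on the cube with mean vector `z ∈ [-1,1]^n`:
the law of `X(z)`. -/
def prodW {n : ℕ} (z : Fin n → ℝ) (y : Fin n → ℝ) : ℝ := ∏ i, (1 + y i * z i) / 2

/-- `q` (the law of a random vector `X` on the cube) is a `(ρ,δ)`-mixture:
there is a coupling of `X(ρ)` and `X` with `E‖X(ρ) - X‖₁ ≤ δ n`. -/
def IsMixture {n : ℕ} (q : (Fin n → ℝ) → ℝ) (ρ : Measure (Fin n → ℝ)) (δ : ℝ) : Prop :=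
  ∃ π : (Fin n → ℝ) × (Fin n → ℝ) → ℝ,
    (∀ a, 0 ≤ π a) ∧
    (∀ x ∈ cube n, ∑ y ∈ cube n, π (x, y) = ∫ z, prodW z x ∂ρ) ∧
    (∀ y, ∑ x ∈ cube n, π (x, y) = q y) ∧
    ∑ x ∈ cube n, ∑ y ∈ cube n, π (x, y) * onorm (x - y) ≤ δ * n

/-- `f_ν = log(dν/dμ)` for a weight function `p` on the cube (`μ` uniform). -/
def hamOf {n : ℕ} (p : (Fin n → ℝ) → ℝ) : (Fin n → ℝ) → ℝ :=
  fun y => Real.log ((2 : ℝ) ^ n * p y)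

/-- `Tr(H(ν))` for a weight function `p` on the cube. -/
def traceH {n : ℕ} (p : (Fin n → ℝ) → ℝ) : ℝ :=
  ∑ i, ((∑ y ∈ cube n, p y * (Real.tanh (dd (hamOf p) i y)) ^ 2) -
    (∑ y ∈ cube n, p y * Real.tanh (dd (hamOf p) i y)) ^ 2)

/-- Proposition `phi_and_g_are_close` of the paper.
With `g = ψ ∘ f` the smoothed-cutoff Hamiltonian and `φ` the hard-cutoff density,
there is a coupling of `X_n^g ∼ ν` and `X_φ ∼ σ` with `E‖X_n^g - X_φ‖₁ ≤ 2n·2^{-n}`;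
in fact `TV(ν,σ) ≤ 2·2^{-n}`. -/
theorem phi_and_g_are_close (n : ℕ) (t δ : ℝ) (hδ : 0 < δ)
    (f : (Fin n → ℝ) → ℝ)
    (hz : ∃ z ∈ cube n, t * n ≤ f z)
    (h₀ ψ : ℝ → ℝ) (g : (Fin n → ℝ) → ℝ)
    (hh₀ : h₀ = fun x => if x ≤ -1 then 2 * x + 1 else if x ≤ 0 then -x ^ 2 else 0)
    (hψ : ψ = fun x => n * h₀ ((x / n - t) / δ))
    (hg : g = ψ ∘ f)
    (δ' : ℝ) (hδ' : δ' = (Real.log 4 + 1) / 2 * δ)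
    (φ : (Fin n → ℝ) → ℝ)
    (hφ : φ = fun y => if f y < (t - δ') * n then 0
      else if f y < t * n then Real.exp (g y) else 1)
    (q : (Fin n → ℝ) → ℝ)
    (hq : q = fun y => if y ∈ cube n then φ y / ∑ z ∈ cube n, φ z else 0) :
    (∃ π : (Fin n → ℝ) × (Fin n → ℝ) → ℝ,
      (∀ a, 0 ≤ π a) ∧
      (∀ x, ∑ y ∈ cube n, π (x, y) = gibbs g x) ∧
      (∀ y, ∑ x ∈ cube n, π (x, y) = q y) ∧
      ∑ x ∈ cube n, ∑ y ∈ cube n, π (x, y) * onorm (x - y) ≤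
        2 * n * ((2 : ℝ) ^ n)⁻¹) ∧
    (1 / 2) * ∑ y ∈ cube n, |gibbs g y - q y| ≤ 2 * ((2 : ℝ) ^ n)⁻¹ := by
  classical
  obtain ⟨z, hzc, hzf⟩ := hz
  have hlog4 : (1:ℝ) ≤ Real.log 4 := by
    have h2 := Real.log_two_gt_d9
    have h4 : Real.log 4 = 2 * Real.log 2 := by
      rw [show (4:ℝ) = 2^2 by norm_num, Real.log_pow]; push_cast; ring
    rw [h4]; linarith
  have hδ'pos : 0 ≤ δ' := by rw [hδ']; nlinarith
  have hgval : ∀ y, g y = n * h₀ ((f y / n - t) / δ) := by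
    intro y; rw [hg]; simp only [Function.comp_apply]; rw [hψ]
  have gA : ∀ y, t * n ≤ f y → g y = 0 := by
    intro y hy
    rw [hgval]
    rcases Nat.eq_zero_or_pos n with hn | hn
    · simp [hn]
    · have hn' : (0:ℝ) < n := by exact_mod_cast hn
      have hx : 0 ≤ (f y / n - t) / δ := by
        apply div_nonneg _ hδ.le
        have h1 : t ≤ f y / n := (le_div_iff₀ hn').mpr (by linarith)
        linarith
      set x := (f y / n - t) / δ with hxdef
      have h1 : ¬ x ≤ -1 := by linarith
      rw [hh₀]
      by_cases h2 : x ≤ 0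
      · have hx0 : x = 0 := le_antisymm h2 hx
        simp [h1, hx0]
      · simp [h1, h2]
  have gz : g z = 0 := gA z hzf
  have hφval : ∀ y, φ y = if f y < (t - δ') * n then 0 else Real.exp (g y) := by
    intro y
    rw [hφ]
    by_cases h1 : f y < (t - δ') * n
    · simp [h1]
    · by_cases h2 : f y < t * n
      · simp [h1, h2]
      · simp [h1, h2, gA y (not_lt.mp h2)]
  have hφnonneg : ∀ y, 0 ≤ φ y := by
    intro y; rw [hφval]; split
    · exact le_refl 0
    · exact (Real.exp_pos _).le
  have hφle : ∀ y, φ y ≤ Real.exp (g y) := by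
    intro y; rw [hφval]; split
    · exact (Real.exp_pos _).le
    · exact le_refl _
  have hφz : φ z = 1 := by
    rw [hφval]
    have h1 : ¬ f z < (t - δ') * n := by
      push_neg
      nlinarith [Nat.cast_nonneg (α := ℝ) n]
    rw [if_neg h1, gz, Real.exp_zero]
  have hcard : ((cube n).card : ℝ) = 2 ^ n := by
    have hc : (cube n).card = 2 ^ n := by
      rw [cube, Fintype.card_piFinset]
      have h2 : ({-1, 1} : Finset ℝ).card = 2 := by
        rw [Finset.card_insert_of_notMem (by norm_num), Finset.card_singleton]
      simp [h2]
    rw [hc]; push_cast; ring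
  have hB : ∀ y ∈ cube n, Real.exp (g y) - φ y ≤ ((2:ℝ)^n)⁻¹ * ((2:ℝ)^n)⁻¹ := by
    intro y hy
    rw [hφval]
    split
    case isTrue hcase =>
      rcases Nat.eq_zero_or_pos n with hn | hn
      · exfalso
        subst hn
        have hyz : y = z := Subsingleton.elim y z
        rw [hyz] at hcase
        simp only [Nat.cast_zero, mul_zero] at hcase hzf
        linarith
      · have hn' : (0:ℝ) < n := by exact_mod_cast hn
        set x := (f y / n - t) / δ with hxdef
        have h1 : f y / n - t < -δ' := by
          have := (div_lt_iff₀ hn').mpr (show f y < (t - δ') * n from hcase)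
          linarith
        have h2 : x < -δ' / δ := by
          rw [hxdef]
          exact (div_lt_div_iff_of_pos_right hδ).mpr (by linarith)
        have h3 : -δ' / δ = -((Real.log 4 + 1) / 2) := by
          rw [hδ']; field_simp
        rw [h3] at h2
        have hx1 : x ≤ -1 := by linarith
        have hh : h₀ x = 2 * x + 1 := by rw [hh₀]; simp [hx1]
        have hgy : g y ≤ -((n:ℝ) * Real.log 4) := by
          rw [hgval y, ← hxdef, hh]
          have h5 : 2 * x + 1 ≤ -Real.log 4 := by linarith
          calc (n:ℝ) * (2 * x + 1) ≤ (n:ℝ) * (-Real.log 4) :=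
                mul_le_mul_of_nonneg_left h5 hn'.le
            _ = -((n:ℝ) * Real.log 4) := by ring
        have hexp : Real.exp (g y) ≤ ((4:ℝ)⁻¹) ^ n := by
          calc Real.exp (g y) ≤ Real.exp ((n:ℝ) * (-Real.log 4)) := by
                apply Real.exp_le_exp.mpr; linarith
            _ = Real.exp (-Real.log 4) ^ n := Real.exp_nat_mul _ n
            _ = ((4:ℝ)⁻¹) ^ n := by
                rw [Real.exp_neg, Real.exp_log (by norm_num : (0:ℝ) < 4)]
        have h4 : ((2:ℝ)^n)⁻¹ * ((2:ℝ)^n)⁻¹ = ((4:ℝ)⁻¹) ^ n := by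
          rw [← mul_inv, ← mul_pow, ← inv_pow]; norm_num
        rw [h4]; linarith [hexp]
    case isFalse hcase =>
      simp only [sub_self]
      positivity
  set Z := ∑ w ∈ cube n, Real.exp (g w) with hZdef
  set S := ∑ w ∈ cube n, φ w with hSdef
  clear_value Z S
  have hZge1 : 1 ≤ Z := by
    have h := Finset.single_le_sum (f := fun w => Real.exp (g w))
      (fun i _ => (Real.exp_pos _).le) hzc
    simp only [gz, Real.exp_zero] at h
    rw [hZdef]; exact h
  have hSge1 : 1 ≤ S := by
    have h := Finset.single_le_sum (f := fun w => φ w) (fun i _ => hφnonneg i) hzc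
    simp only [hφz] at h
    rw [hSdef]; exact h
  have hZpos : (0:ℝ) < Z := by linarith
  have hSpos : (0:ℝ) < S := by linarith
  have hSleZ : S ≤ Z := by
    rw [hZdef, hSdef]; exact Finset.sum_le_sum (fun y _ => hφle y)
  have hZS : Z - S ≤ ((2:ℝ)^n)⁻¹ := by
    have h1 : Z - S = ∑ y ∈ cube n, (Real.exp (g y) - φ y) := by
      rw [Finset.sum_sub_distrib, hZdef, hSdef]
    have h2 : ∑ y ∈ cube n, (Real.exp (g y) - φ y) ≤
        ∑ y ∈ cube n, ((2:ℝ)^n)⁻¹ * ((2:ℝ)^n)⁻¹ :=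
      Finset.sum_le_sum hB
    rw [h1]
    refine h2.trans ?_
    rw [Finset.sum_const, nsmul_eq_mul, hcard]
    have h2n : ((2:ℝ)^n) ≠ 0 := by positivity
    rw [show (2:ℝ)^n * ((2^n)⁻¹*(2^n)⁻¹) = ((2:ℝ)^n * (2^n)⁻¹) * (2^n)⁻¹ by ring,
      mul_inv_cancel₀ h2n, one_mul]
  -- values of the two densities
  have hpval : ∀ y ∈ cube n, gibbs g y = Real.exp (g y) / Z := by
    intro y hy
    rw [gibbs, if_pos hy, ← hZdef]
  have hp0 : ∀ y, y ∉ cube n → gibbs g y = 0 := by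
    intro y hy; rw [gibbs, if_neg hy]
  have hqval : ∀ y ∈ cube n, q y = φ y / S := by
    intro y hy; rw [hq]; simp only [if_pos hy]
  have hq0 : ∀ y, y ∉ cube n → q y = 0 := by
    intro y hy; rw [hq]; exact if_neg hy
  have hsump : ∑ y ∈ cube n, gibbs g y = 1 := by
    rw [Finset.sum_congr rfl hpval, ← Finset.sum_div, ← hZdef, div_self hZpos.ne']
  have hsumq : ∑ y ∈ cube n, q y = 1 := by
    rw [Finset.sum_congr rfl hqval, ← Finset.sum_div, ← hSdef, div_self hSpos.ne']
  have hpnonneg : ∀ y, 0 ≤ gibbs g y := by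
    intro y
    by_cases hy : y ∈ cube n
    · rw [hpval y hy]; positivity
    · rw [hp0 y hy]
  have hqnonneg : ∀ y, 0 ≤ q y := by
    intro y
    by_cases hy : y ∈ cube n
    · rw [hqval y hy]; exact div_nonneg (hφnonneg y) hSpos.le
    · rw [hq0 y hy]
  -- total variation bound
  have key : ∀ y ∈ cube n, |gibbs g y - q y| ≤
      (Real.exp (g y) - φ y) / Z + φ y * (1 / S - 1 / Z) := by
    intro y hy
    rw [hpval y hy, hqval y hy]
    have ha : 0 ≤ (Real.exp (g y) - φ y) / Z :=
      div_nonneg (by linarith [hφle y]) hZpos.le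
    have hb : 0 ≤ φ y * (1 / S - 1 / Z) := by
      apply mul_nonneg (hφnonneg y)
      have := one_div_le_one_div_of_le hSpos hSleZ
      linarith
    have heq : Real.exp (g y) / Z - φ y / S =
        (Real.exp (g y) - φ y) / Z - φ y * (1 / S - 1 / Z) := by
      field_simp [hZpos.ne', hSpos.ne']
      ring
    rw [heq]
    rw [abs_le]
    constructor <;> linarith
  have hTVraw : ∑ y ∈ cube n, |gibbs g y - q y| ≤ 2 * (Z - S) := by
    calc ∑ y ∈ cube n, |gibbs g y - q y|
        ≤ ∑ y ∈ cube n, ((Real.exp (g y) - φ y) / Z + φ y * (1 / S - 1 / Z)) :=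
          Finset.sum_le_sum key
      _ = (Z - S) / Z + S * (1 / S - 1 / Z) := by
          rw [Finset.sum_add_distrib, ← Finset.sum_div, ← Finset.sum_mul,
            Finset.sum_sub_distrib, ← hZdef, ← hSdef]
      _ ≤ 2 * (Z - S) := by
          have h1 : (Z - S) / Z ≤ Z - S := by
            rw [div_le_iff₀ hZpos]; nlinarith
          have h2 : S * (1 / S - 1 / Z) = (Z - S) / Z := by
            field_simp [hZpos.ne', hSpos.ne']
          linarith
  have hTV : ∑ y ∈ cube n, |gibbs g y - q y| ≤ 2 * ((2:ℝ)^n)⁻¹ := by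
    linarith
  constructor
  · -- the coupling
    set m : (Fin n → ℝ) → ℝ := fun y => min (gibbs g y) (q y) with hmdef
    set r : (Fin n → ℝ) → ℝ := fun x => gibbs g x - m x with hrdef
    set s : (Fin n → ℝ) → ℝ := fun y => q y - m y with hsdef
    set D : ℝ := ∑ x ∈ cube n, r x with hDdef
    have hmnonneg : ∀ y, 0 ≤ m y := fun y => le_min (hpnonneg y) (hqnonneg y)
    have hrnonneg : ∀ x, 0 ≤ r x := fun x => by
      simp only [hrdef, sub_nonneg]; exact min_le_left _ _
    have hsnonneg : ∀ y, 0 ≤ s y := fun y => by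
      simp only [hsdef, sub_nonneg]; exact min_le_right _ _
    have hDnonneg : 0 ≤ D := Finset.sum_nonneg (fun x _ => hrnonneg x)
    have hm0 : ∀ y, y ∉ cube n → m y = 0 := by
      intro y hy; simp [hmdef, hp0 y hy, hq0 y hy]
    have hsum_s : ∑ y ∈ cube n, s y = D := by
      simp only [hsdef, hrdef, hDdef]
      rw [Finset.sum_sub_distrib, Finset.sum_sub_distrib, hsump, hsumq]
    have hDle : D ≤ ((2:ℝ)^n)⁻¹ := by
      have h2r : ∀ x, 2 * r x = |gibbs g x - q x| + (gibbs g x - q x) := by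
        intro x
        rcases le_total (gibbs g x) (q x) with h | h
        · simp only [hrdef, hmdef, min_eq_left h, abs_of_nonpos (by linarith :
            gibbs g x - q x ≤ 0)]
          ring
        · simp only [hrdef, hmdef, min_eq_right h, abs_of_nonneg (by linarith :
            (0:ℝ) ≤ gibbs g x - q x)]
          ring
      have : 2 * D = ∑ x ∈ cube n, |gibbs g x - q x| := by
        rw [hDdef, Finset.mul_sum]
        rw [Finset.sum_congr rfl (fun x _ => h2r x)]
        rw [Finset.sum_add_distrib, Finset.sum_sub_distrib, hsump, hsumq]
        ring
      linarith [hTV, hZS, hTVraw]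
    refine ⟨fun a => (if a.1 = a.2 then m a.1 else 0) + r a.1 * s a.2 / D,
      ?_, ?_, ?_, ?_⟩
    · intro a
      apply add_nonneg
      · split
        · exact hmnonneg _
        · exact le_refl 0
      · exact div_nonneg (mul_nonneg (hrnonneg _) (hsnonneg _)) hDnonneg
    · -- first marginal
      intro x
      rw [Finset.sum_add_distrib, Finset.sum_ite_eq]
      have hfac : ∑ y ∈ cube n, r x * s y / D = r x / D * D := by
        rw [Finset.sum_congr rfl (fun y _ => by ring :
          ∀ y ∈ cube n, r x * s y / D = r x / D * s y), ← Finset.mul_sum, hsum_s]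
      rw [hfac]
      by_cases hD : D = 0
      · rw [hD, mul_zero]
        by_cases hx : x ∈ cube n
        · have hr0 : r x = 0 := by
            have := (Finset.sum_eq_zero_iff_of_nonneg
              (fun i _ => hrnonneg i)).mp (hDdef ▸ hD) x hx
            exact this
          rw [if_pos hx]
          have : m x = gibbs g x := by
            have := hr0
            simp only [hrdef] at this
            linarith
          rw [this, add_zero]
        · rw [if_neg hx, hp0 x hx, add_zero]
      · rw [div_mul_cancel₀ _ hD]
        by_cases hx : x ∈ cube n
        · rw [if_pos hx]
          simp only [hrdef]
          ring
        · rw [if_neg hx, hp0 x hx]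
          simp only [hrdef, hm0 x hx, hp0 x hx]
          ring
    · -- second marginal
      intro y
      rw [Finset.sum_add_distrib, Finset.sum_ite_eq']
      have hfac : ∑ x ∈ cube n, r x * s y / D = D * (s y / D) := by
        rw [Finset.sum_congr rfl (fun x _ => by ring :
          ∀ x ∈ cube n, r x * s y / D = r x * (s y / D)), ← Finset.sum_mul]
      rw [hfac]
      by_cases hD : D = 0
      · rw [hD, zero_mul]
        by_cases hy : y ∈ cube n
        · have hs0 : s y = 0 := by
            have hsz : ∑ w ∈ cube n, s w = 0 := by rw [hsum_s, hD]
            exact (Finset.sum_eq_zero_iff_of_nonneg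
              (fun i _ => hsnonneg i)).mp hsz y hy
          rw [if_pos hy]
          have : m y = q y := by
            simp only [hsdef] at hs0
            linarith
          rw [this, add_zero]
        · rw [if_neg hy, hq0 y hy, add_zero]
      · rw [mul_div_cancel₀ _ hD]
        by_cases hy : y ∈ cube n
        · rw [if_pos hy]
          simp only [hsdef]
          ring
        · rw [if_neg hy, hq0 y hy]
          simp only [hsdef, hm0 y hy, hq0 y hy]
          ring
    · -- transport cost
      have honorm : ∀ x ∈ cube n, ∀ y ∈ cube n, onorm (x - y) ≤ 2 * n := by
        intro x hx y hy
        have hxi : ∀ i, x i = -1 ∨ x i = 1 := by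
          intro i
          have := (Fintype.mem_piFinset.mp hx) i
          simpa using this
        have hyi : ∀ i, y i = -1 ∨ y i = 1 := by
          intro i
          have := (Fintype.mem_piFinset.mp hy) i
          simpa using this
        have hbound : ∀ i, |x i - y i| ≤ 2 := by
          intro i
          rcases hxi i with h | h <;> rcases hyi i with h' | h' <;>
            rw [h, h'] <;> norm_num
        calc onorm (x - y) = ∑ i, |x i - y i| := by
              simp [onorm]
          _ ≤ ∑ _i : Fin n, (2:ℝ) := Finset.sum_le_sum (fun i _ => hbound i)
          _ = 2 * n := by
              rw [Finset.sum_const, nsmul_eq_mul]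
              simp [mul_comm]
      have hsplit : ∀ x y : Fin n → ℝ,
          ((if x = y then m x else 0) + r x * s y / D) * onorm (x - y) =
          (if x = y then m x else 0) * onorm (x - y) +
            r x * s y / D * onorm (x - y) := by
        intro x y; ring
      calc ∑ x ∈ cube n, ∑ y ∈ cube n,
            ((if x = y then m x else 0) + r x * s y / D) * onorm (x - y)
          = ∑ x ∈ cube n, ∑ y ∈ cube n,
              ((if x = y then m x else 0) * onorm (x - y) +
                r x * s y / D * onorm (x - y)) := by
            refine Finset.sum_congr rfl fun x _ => Finset.sum_congr rfl fun y _ => ?_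
            exact hsplit x y
        _ = ∑ x ∈ cube n, ∑ y ∈ cube n, r x * s y / D * onorm (x - y) := by
            refine Finset.sum_congr rfl fun x hx => ?_
            rw [Finset.sum_add_distrib]
            have hz0 : ∑ y ∈ cube n, (if x = y then m x else 0) * onorm (x - y)
                = 0 := by
              apply Finset.sum_eq_zero
              intro y hy
              by_cases hxy : x = y
              · subst hxy
                have : onorm (x - x) = 0 := by simp [onorm]
                rw [this, mul_zero]
              · rw [if_neg hxy, zero_mul]
            rw [hz0, zero_add]
        _ ≤ ∑ x ∈ cube n, ∑ y ∈ cube n, r x * s y / D * (2 * n) := by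
            refine Finset.sum_le_sum fun x hx => Finset.sum_le_sum fun y hy => ?_
            apply mul_le_mul_of_nonneg_left (honorm x hx y hy)
            exact div_nonneg (mul_nonneg (hrnonneg _) (hsnonneg _)) hDnonneg
        _ ≤ 2 * n * ((2:ℝ)^n)⁻¹ := by
            by_cases hD : D = 0
            · have hzero : ∀ x ∈ cube n, ∀ y ∈ cube n,
                  r x * s y / D * (2 * n) = 0 := by
                intro x hx y hy
                have hr0 : r x = 0 := (Finset.sum_eq_zero_iff_of_nonneg
                  (fun i _ => hrnonneg i)).mp (hDdef ▸ hD) x hx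
                rw [hr0, zero_mul, zero_div, zero_mul]
              calc ∑ x ∈ cube n, ∑ y ∈ cube n, r x * s y / D * (2 * n)
                  = 0 := by
                    apply Finset.sum_eq_zero
                    intro x hx
                    exact Finset.sum_eq_zero (fun y hy => hzero x hx y hy)
                _ ≤ 2 * n * ((2:ℝ)^n)⁻¹ := by positivity
            · have hcalc : ∑ x ∈ cube n, ∑ y ∈ cube n, r x * s y / D * (2 * n)
                  = 2 * n * D := by
                have step : ∀ x, ∑ y ∈ cube n, r x * s y / D * (2 * n)
                    = r x * (2 * n) := by
                  intro x
                  rw [Finset.sum_congr rfl (fun y _ => by ring :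
                    ∀ y ∈ cube n, r x * s y / D * (2 * n)
                      = (r x * (2 * n) / D) * s y), ← Finset.mul_sum, hsum_s]
                  field_simp
                rw [Finset.sum_congr rfl (fun x _ => step x), ← Finset.sum_mul,
                  ← hDdef]
                ring
              rw [hcalc]
              have : 2 * (n:ℝ) * D ≤ 2 * n * ((2:ℝ)^n)⁻¹ := by
                apply mul_le_mul_of_nonneg_left hDle
                positivity
              exact this
  · -- total variation
    have hinv : (0:ℝ) ≤ ((2:ℝ)^n)⁻¹ := by positivity
    linarith

end Paper
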